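/- Let G be a unicyclic graph whose unique cycle is u_1,...,u_n with n ≥ 3. Suppose N_G(u_1) = {u_2, u_n, v_1} and N_G(v_1) = {u_1, v_2}, where v_2 is a leaf of G. Let H be the induced subgraph of G on V(G) \ {u_1, v_1, v_2}. Then τ_max(H) ≤ τ_max(G) − 2. -/

import Mathlib

/-- `C` is a vertex cover of the graph `G`. -/
def gIsCover {V : Type} (G : SimpleGraph V) (C : Finset V) : Prop :=
  ∀ ⦃x y⦄, G.Adj x y → x ∈ C ∨ y ∈ C

/-- `C` is a minimal vertex cover of `G`. -/
def gIsMinCover {V : Type} (G : SimpleGraph V) (C : Finset V) : Prop :=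
  gIsCover G C ∧ ∀ D ⊂ C, ¬ gIsCover G D

/-- `τ_max(G)`: the maximum cardinality of a minimal vertex cover of `G`. -/
noncomputable def gTauMax {V : Type} (G : SimpleGraph V) : ℕ :=
  sSup {m | ∃ C : Finset V, gIsMinCover G C ∧ C.card = m}

/-- The subgraph of `G` induced on the vertex subset `s` (kept on the same ambient
vertex type: all vertices outside `s` become isolated, which does not affect
minimal vertex covers). -/
def SimpleGraph.restrict {V : Type} (G : SimpleGraph V) (s : Set V) : SimpleGraph V where
  Adj x y := G.Adj x y ∧ x ∈ s ∧ y ∈ s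
  symm := ⟨fun x y ⟨h, hx, hy⟩ => ⟨h.symm, hy, hx⟩⟩
  loopless := ⟨fun x ⟨h, _, _⟩ => G.loopless.irrefl x h⟩

/-! A largest minimal vertex cover `C` of `H` extends to the minimal vertex cover
`C ∪ {u₁, v₂}` of `G`. It covers every edge: an edge of `G` not in `H` meets `u₁`, `v₁` or `v₂`,
and the neighbours of `v₁` are `u₁` and `v₂`. It is minimal: `v₁` lies outside it and is a
private neighbour of both `u₁` and `v₂`, while the private neighbours of `C` in `H` stay private.
As `v₂` is a leaf and `u₁` is not, `u₁ ≠ v₂`, so the cover has `|C| + 2` vertices. -/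

namespace SimpleGraph

lemma eq_of_adj_of_degree_eq_one {V : Type} {G : SimpleGraph V} [Fintype V] [DecidableRel G.Adj]
    {v y z : V} (hv : G.degree v = 1) (hy : G.Adj v y) (hz : G.Adj v z) : y = z := by
  obtain ⟨w, -, hw⟩ := degree_eq_one_iff_existsUnique_adj.1 hv
  exact (hw y hy).trans (hw z hz).symm

end SimpleGraph

section MinimalCover

variable {V : Type} {G : SimpleGraph V}

lemma gIsMinCover_iff [DecidableEq V] {C : Finset V} :
    gIsMinCover G C ↔ gIsCover G C ∧ ∀ x ∈ C, ∃ y, G.Adj x y ∧ y ∉ C := by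
  refine ⟨fun ⟨hC, hmin⟩ => ⟨hC, fun x hx => ?_⟩,
    fun ⟨hC, hpriv⟩ => ⟨hC, fun D hDC hD => ?_⟩⟩
  · by_contra! hx'
    refine hmin (C.erase x) (Finset.erase_ssubset hx) fun a b hab => ?_
    grind [hC hab, hx' a, hx' b, G.ne_of_adj hab, G.adj_symm hab]
  · obtain ⟨x, hxC, hxD⟩ := Finset.exists_of_ssubset hDC
    obtain ⟨y, hxy, hyC⟩ := hpriv x hxC
    exact (hD hxy).elim hxD fun hyD => hyC (hDC.subset hyD)

lemma exists_gIsMinCover [Fintype V] (G : SimpleGraph V) : ∃ C, gIsMinCover G C := by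
  obtain ⟨C, hC, hmin⟩ := wellFounded_lt.has_min {C : Finset V | gIsCover G C}
    ⟨Finset.univ, fun x _ _ => Or.inl (Finset.mem_univ x)⟩
  exact ⟨C, hC, fun D hDC hD => hmin D hD hDC⟩

lemma bddAbove_gIsMinCover_card [Fintype V] (G : SimpleGraph V) :
    BddAbove {m | ∃ C : Finset V, gIsMinCover G C ∧ C.card = m} :=
  ⟨Fintype.card V, by rintro _ ⟨C, -, rfl⟩; exact C.card_le_univ⟩

lemma gIsMinCover.card_le_gTauMax [Fintype V] {C : Finset V} (hC : gIsMinCover G C) :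
    C.card ≤ gTauMax G :=
  le_csSup (bddAbove_gIsMinCover_card G) ⟨C, hC, rfl⟩

lemma exists_gIsMinCover_card_eq_gTauMax [Fintype V] (G : SimpleGraph V) :
    ∃ C, gIsMinCover G C ∧ C.card = gTauMax G :=
  Nat.sSup_mem (by obtain ⟨C, hC⟩ := exists_gIsMinCover G; exact ⟨_, C, hC, rfl⟩)
    (bddAbove_gIsMinCover_card G)

lemma gIsMinCover.subset_of_restrict {s : Set V} {C : Finset V}
    (hC : gIsMinCover (G.restrict s) C) : ↑C ⊆ s := by
  classical
  intro x hx
  obtain ⟨y, hxy, -⟩ := (gIsMinCover_iff.1 hC).2 x hx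
  exact hxy.2.1

lemma gIsMinCover.insert_insert_of_restrict [DecidableEq V] {a b c : V} (hab : G.Adj a b)
    (hbc : G.Adj b c) (hb : ∀ y, G.Adj b y → y = a ∨ y = c) {C : Finset V}
    (hC : gIsMinCover (G.restrict {x | x ≠ a ∧ x ≠ b ∧ x ≠ c}) C) :
    gIsMinCover G (insert a (insert c C)) := by
  obtain ⟨hcov, hpriv⟩ := gIsMinCover_iff.1 hC
  have hbC : b ∉ insert a (insert c C) := by
    simp only [Finset.mem_insert, not_or]
    exact ⟨hab.ne', hbc.ne, fun h => (hC.subset_of_restrict h).2.1 rfl⟩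
  refine gIsMinCover_iff.2 ⟨fun x y hxy => ?_, fun x hx => ?_⟩
  · simp only [Finset.mem_insert]
    have hxb (h : x = b) := hb y (h ▸ hxy)
    have hyb (h : y = b) := hb x (h ▸ hxy.symm)
    have := @hcov x y
    simp only [SimpleGraph.restrict, Set.mem_ofPred_eq] at this
    tauto
  · rcases Finset.mem_insert.1 hx with rfl | hx
    · exact ⟨b, hab, hbC⟩
    rcases Finset.mem_insert.1 hx with rfl | hx
    · exact ⟨b, hbc.symm, hbC⟩
    obtain ⟨y, ⟨hxy, -, hy⟩, hyC⟩ := hpriv x hx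
    exact ⟨y, hxy, by simp [hy.1, hy.2.2, hyC]⟩

lemma gTauMax_restrict_add_two_le [Fintype V] {a b c : V} (hab : G.Adj a b) (hbc : G.Adj b c)
    (hb : ∀ y, G.Adj b y → y = a ∨ y = c) (hac : a ≠ c) :
    gTauMax (G.restrict {x | x ≠ a ∧ x ≠ b ∧ x ≠ c}) + 2 ≤ gTauMax G := by
  classical
  obtain ⟨C, hC, hcard⟩ := exists_gIsMinCover_card_eq_gTauMax
    (G.restrict {x | x ≠ a ∧ x ≠ b ∧ x ≠ c})
  have haC : a ∉ C := fun h => (hC.subset_of_restrict h).1 rfl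
  have hcC : c ∉ C := fun h => (hC.subset_of_restrict h).2.2 rfl
  calc gTauMax _ + 2 = (insert a (insert c C)).card := by
        rw [Finset.card_insert_of_notMem (by simp [hac, haC]), Finset.card_insert_of_notMem hcC,
          hcard]
    _ ≤ gTauMax G := (hC.insert_insert_of_restrict hab hbc hb).card_le_gTauMax

end MinimalCover

/-- Let `G` be a unicyclic graph whose unique cycle is `u₁,...,u_n`
(`n ≥ 3`); uniqueness of the cycle is expressed by: deleting one cycle edge leaves an
acyclic graph. Suppose `N_G(u₁) = {u₂, u_n, v₁}` and `N_G(v₁) = {u₁, v₂}` with `v₂` a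
leaf. If `H` is the induced subgraph on `V(G) \ {u₁, v₁, v₂}`, then
`τ_max(H) ≤ τ_max(G) - 2`. -/
theorem stmt_9 {V : Type} [Fintype V] (G : SimpleGraph V)
    [DecidableRel G.Adj] (n : ℕ) (hn : 3 ≤ n)
    (u : Fin n → V) (hinj : Function.Injective u)
    (v1 v2 : V)
    (hN1 : G.neighborSet (u ⟨0, by omega⟩) = {u ⟨1, by omega⟩, u ⟨n - 1, by omega⟩, v1})
    (hNv1 : G.neighborSet v1 = {u ⟨0, by omega⟩, v2})
    (hv2leaf : G.degree v2 = 1) :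
    gTauMax (G.restrict {x | x ≠ u ⟨0, by omega⟩ ∧ x ≠ v1 ∧ x ≠ v2}) + 2
      ≤ gTauMax G := by
  have hu1 (y : V) : G.Adj (u ⟨0, by omega⟩) y ↔
      y = u ⟨1, by omega⟩ ∨ y = u ⟨n - 1, by omega⟩ ∨ y = v1 := by
    rw [← SimpleGraph.mem_neighborSet, hN1]; rfl
  have hv1 (y : V) : G.Adj v1 y ↔ y = u ⟨0, by omega⟩ ∨ y = v2 := by
    rw [← SimpleGraph.mem_neighborSet, hNv1]; rfl
  refine gTauMax_restrict_add_two_le ((hv1 _).2 (.inl rfl)).symm ((hv1 _).2 (.inr rfl))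
    (fun y => (hv1 y).1) fun h => ?_
  have := hinj <| G.eq_of_adj_of_degree_eq_one hv2leaf (h ▸ (hu1 _).2 (.inl rfl))
    (h ▸ (hu1 _).2 (.inr (.inl rfl)))
  simp only [Fin.mk.injEq] at this
  omega
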